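/- The function α ↦ 2(1+α²)Φ(−α) − 2αφ(α) is strictly decreasing on [0,∞), equals 1 at α = 0, and tends to 0 as α → ∞. -/

import Mathlib

/-- Standard Gaussian density φ. -/
noncomputable def stdGaussPDF (z : ℝ) : ℝ := Real.exp (-z^2/2) / Real.sqrt (2*Real.pi)

/-- Standard Gaussian CDF Φ. -/
noncomputable def stdGaussCDF (z : ℝ) : ℝ := ∫ u in Set.Iic z, stdGaussPDF u

/-!
Since `φ' = -u φ`, the derivative of `f(α) = 2(1+α²)Φ(−α) − 2αφ(α)` is `−4(φ(α) − αΦ(−α))`, and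
`φ(α) − αΦ(−α) = ∫_{u ≤ −α} (−α − u) φ(u) du > 0` (Mills' inequality), so `f` is strictly
decreasing on all of `ℝ`. At `0` only `Φ(0) = 1/2` remains. As `α → ∞`, Mills' inequality
squeezes `f(α)` between `±2αφ(α)`, which tends to `0`.
-/

open Real MeasureTheory Set Filter Topology ProbabilityTheory

lemma stdGaussPDF_eq_gaussianPDFReal : stdGaussPDF = gaussianPDFReal 0 1 := by
  ext z
  simp [stdGaussPDF, gaussianPDFReal, div_eq_inv_mul]

lemma stdGaussPDF_pos (z : ℝ) : 0 < stdGaussPDF z := by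
  rw [stdGaussPDF_eq_gaussianPDFReal]
  exact gaussianPDFReal_pos _ _ _ one_ne_zero

lemma stdGaussPDF_neg (z : ℝ) : stdGaussPDF (-z) = stdGaussPDF z := by
  simp [stdGaussPDF]

lemma continuous_stdGaussPDF : Continuous stdGaussPDF := by
  unfold stdGaussPDF
  fun_prop

lemma integrable_stdGaussPDF : Integrable stdGaussPDF :=
  stdGaussPDF_eq_gaussianPDFReal ▸ integrable_gaussianPDFReal 0 1

lemma integral_stdGaussPDF : ∫ u, stdGaussPDF u = 1 :=
  stdGaussPDF_eq_gaussianPDFReal ▸ integral_gaussianPDFReal_eq_one 0 one_ne_zero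

lemma stdGaussPDF_eq_exp_neg_mul_sq (z : ℝ) :
    stdGaussPDF z = exp (-(1 / 2) * z ^ 2) / √(2 * π) := by
  rw [stdGaussPDF]; ring_nf

lemma integrable_mul_stdGaussPDF : Integrable fun u => u * stdGaussPDF u := by
  simpa only [stdGaussPDF_eq_exp_neg_mul_sq, mul_div_assoc] using
    (integrable_mul_exp_neg_mul_sq (b := 1 / 2) one_half_pos).div_const √(2 * π)

lemma hasDerivAt_stdGaussPDF (z : ℝ) : HasDerivAt stdGaussPDF (-z * stdGaussPDF z) z := by
  have h : HasDerivAt (fun x : ℝ => -x ^ 2 / 2) (-z) z := by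
    refine ((hasDerivAt_pow 2 z).fun_neg.div_const 2).congr_deriv ?_
    push_cast; ring
  exact (h.exp.div_const _).congr_deriv (by rw [stdGaussPDF]; ring)

lemma tendsto_abs_rpow_mul_stdGaussPDF_cocompact (s : ℝ) :
    Tendsto (fun z => |z| ^ s * stdGaussPDF z) (cocompact ℝ) (𝓝 0) := by
  simpa only [stdGaussPDF_eq_exp_neg_mul_sq, mul_div_assoc, zero_div] using
    (tendsto_rpow_abs_mul_exp_neg_mul_sq_cocompact one_half_pos s).div_const √(2 * π)

lemma tendsto_stdGaussPDF_atBot : Tendsto stdGaussPDF atBot (𝓝 0) := by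
  simpa using (tendsto_abs_rpow_mul_stdGaussPDF_cocompact 0).mono_left atBot_le_cocompact

lemma tendsto_mul_stdGaussPDF_atTop : Tendsto (fun z => z * stdGaussPDF z) atTop (𝓝 0) := by
  refine ((tendsto_abs_rpow_mul_stdGaussPDF_cocompact 1).mono_left atTop_le_cocompact).congr' ?_
  filter_upwards [eventually_ge_atTop 0] with z hz
  rw [rpow_one, abs_of_nonneg hz]

lemma integral_Iic_mul_stdGaussPDF (b : ℝ) :
    ∫ u in Iic b, u * stdGaussPDF u = -stdGaussPDF b := by
  have hftc := integral_Iic_of_hasDerivAt_of_tendsto' (f := fun u => -stdGaussPDF u) (a := b)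
    (fun z _ => (hasDerivAt_stdGaussPDF z).neg.congr_deriv (by ring))
    integrable_mul_stdGaussPDF.integrableOn (by simpa using tendsto_stdGaussPDF_atBot.neg)
  simpa using hftc

lemma hasDerivAt_integral_Iic {f : ℝ → ℝ} (hf : Continuous f) (hfi : Integrable f) (x : ℝ) :
    HasDerivAt (fun y => ∫ u in Iic y, f u) (f x) x := by
  have hsplit : (fun y => ∫ u in Iic y, f u) =
      fun y => (∫ u in Iic 0, f u) + ∫ u in 0..y, f u := by
    ext y
    rw [← intervalIntegral.integral_Iic_sub_Iic hfi.integrableOn hfi.integrableOn]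
    ring
  rw [hsplit]
  exact (intervalIntegral.integral_hasDerivAt_right hfi.intervalIntegrable
    (hf.stronglyMeasurableAtFilter _ _) hf.continuousAt).const_add _

lemma hasDerivAt_stdGaussCDF (x : ℝ) : HasDerivAt stdGaussCDF (stdGaussPDF x) x :=
  hasDerivAt_integral_Iic continuous_stdGaussPDF integrable_stdGaussPDF x

lemma stdGaussCDF_nonneg (x : ℝ) : 0 ≤ stdGaussCDF x :=
  setIntegral_nonneg measurableSet_Iic fun u _ => (stdGaussPDF_pos u).le

lemma stdGaussCDF_add_stdGaussCDF_neg (x : ℝ) : stdGaussCDF x + stdGaussCDF (-x) = 1 := by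
  have hneg : stdGaussCDF (-x) = ∫ u in Ioi x, stdGaussPDF u := by
    rw [stdGaussCDF, ← integral_comp_neg_Ioi]
    simp only [stdGaussPDF_neg]
  rw [hneg, stdGaussCDF, intervalIntegral.integral_Iic_add_Ioi integrable_stdGaussPDF.integrableOn
    integrable_stdGaussPDF.integrableOn, integral_stdGaussPDF]

lemma stdGaussCDF_zero : stdGaussCDF 0 = 1 / 2 := by
  linarith [neg_zero (G := ℝ) ▸ stdGaussCDF_add_stdGaussCDF_neg 0]

lemma mul_stdGaussCDF_neg_lt_stdGaussPDF (α : ℝ) : α * stdGaussCDF (-α) < stdGaussPDF α := by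
  have hint : Integrable fun u => (-α - u) * stdGaussPDF u := by
    simp_rw [sub_mul]
    exact (integrable_stdGaussPDF.const_mul _).sub integrable_mul_stdGaussPDF
  have hgap : stdGaussPDF α - α * stdGaussCDF (-α) =
      ∫ u in Iic (-α), (-α - u) * stdGaussPDF u := by
    simp_rw [sub_mul]
    rw [integral_sub (integrable_stdGaussPDF.const_mul _).integrableOn
      integrable_mul_stdGaussPDF.integrableOn, integral_const_mul, integral_Iic_mul_stdGaussPDF,
      stdGaussPDF_neg, stdGaussCDF]
    ring
  have hpos : 0 < ∫ u in Iic (-α), (-α - u) * stdGaussPDF u := by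
    rw [setIntegral_pos_iff_support_of_nonneg_ae _ hint.integrableOn]
    · refine lt_of_lt_of_le (by simp) (measure_mono (?_ : Iio (-α) ⊆ _))
      intro u hu
      exact ⟨(mul_pos (sub_pos.2 hu) (stdGaussPDF_pos u)).ne', Iio_subset_Iic_self hu⟩
    · filter_upwards [ae_restrict_mem measurableSet_Iic] with u hu
      exact mul_nonneg (sub_nonneg.2 hu) (stdGaussPDF_pos u).le
  linarith

noncomputable def zeroSignalMSE (α : ℝ) : ℝ :=
  2 * (1 + α ^ 2) * stdGaussCDF (-α) - 2 * α * stdGaussPDF α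

lemma hasDerivAt_zeroSignalMSE (α : ℝ) :
    HasDerivAt zeroSignalMSE (-4 * (stdGaussPDF α - α * stdGaussCDF (-α))) α := by
  have hcdf := (hasDerivAt_stdGaussCDF (-α)).comp α (hasDerivAt_neg α)
  have hpoly : HasDerivAt (fun x : ℝ => 2 * (1 + x ^ 2)) (4 * α) α := by
    refine (((hasDerivAt_pow 2 α).const_add 1).const_mul 2).congr_deriv ?_
    push_cast; ring
  have hlin := (hasDerivAt_id α).const_mul 2
  refine ((hpoly.mul hcdf).sub (hlin.mul (hasDerivAt_stdGaussPDF α))).congr_deriv ?_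
  rw [stdGaussPDF_neg]
  simp only [Function.comp_apply, id_eq]
  ring

lemma strictAnti_zeroSignalMSE : StrictAnti zeroSignalMSE :=
  strictAnti_of_hasDerivAt_neg hasDerivAt_zeroSignalMSE fun α => by
    linarith [mul_stdGaussCDF_neg_lt_stdGaussPDF α]

lemma zeroSignalMSE_zero : zeroSignalMSE 0 = 1 := by
  simp only [zeroSignalMSE, neg_zero, stdGaussCDF_zero]
  norm_num

lemma tendsto_zeroSignalMSE_atTop : Tendsto zeroSignalMSE atTop (𝓝 0) := by
  have hlim := tendsto_mul_stdGaussPDF_atTop.const_mul 2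
  rw [mul_zero] at hlim
  refine tendsto_of_tendsto_of_tendsto_of_le_of_le' (by simpa using hlim.neg) hlim ?_ ?_
  · filter_upwards [eventually_ge_atTop 0] with α hα
    have := mul_nonneg (by positivity : (0:ℝ) ≤ 2 * (1 + α ^ 2)) (stdGaussCDF_nonneg (-α))
    rw [zeroSignalMSE]
    linarith
  · filter_upwards [eventually_ge_atTop 1] with α hα
    have hmills := mul_stdGaussCDF_neg_lt_stdGaussPDF α
    have hcdf := stdGaussCDF_nonneg (-α)
    rw [zeroSignalMSE]
    nlinarith [mul_le_mul_of_nonneg_left hmills.le (by linarith : (0:ℝ) ≤ 4 * α),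
      mul_nonneg (by nlinarith : (0:ℝ) ≤ α ^ 2 - 1) hcdf]

/-- α ↦ 2(1+α²)Φ(−α) − 2αφ(α) is strictly decreasing on [0,∞), equals 1 at 0,
and tends to 0 at ∞. -/
theorem zero_signal_mse_properties :
    StrictAntiOn (fun α : ℝ => 2*(1+α^2) * stdGaussCDF (-α) - 2*α * stdGaussPDF α)
      (Set.Ici 0) ∧
    (2*(1+(0:ℝ)^2) * stdGaussCDF (-(0:ℝ)) - 2*(0:ℝ) * stdGaussPDF 0 = 1) ∧
    Filter.Tendsto (fun α : ℝ => 2*(1+α^2) * stdGaussCDF (-α) - 2*α * stdGaussPDF α)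
      Filter.atTop (nhds 0) :=
  ⟨strictAnti_zeroSignalMSE.strictAntiOn _, zeroSignalMSE_zero, tendsto_zeroSignalMSE_atTop⟩
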